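/- arXiv:1705.01369 — 3 statements merged into one kernel-verified Lean document; each statement's English description precedes it below -/
import Mathlib

section
/- Let a > 0 and γ > 1, and define H(s) = a/(γ-1)·s^γ for s ≥ 0. There exists δ ∈ (0, 1/2] depending only on γ such that for all ϱ, ϱ̃ ≥ 0 with ϱ ≥ δ⁻¹·ϱ̃, one has H(ϱ) − H(ϱ̃) − H'(ϱ̃)(ϱ − ϱ̃) ≥ a/(2(γ−1))·ϱ^γ. -/
/-!
Up to the factor `a/(γ-1)`, the relative quantity is `ϱ^γ - γ ϱ̃^(γ-1) ϱ + (γ-1) ϱ̃^γ`.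
Its last term is nonnegative and, when `ϱ̃ ≤ δ ϱ`, its middle one is at most
`γ δ^(γ-1) ϱ^γ`. So it suffices to take `δ` so small that `γ δ^(γ-1) ≤ 1/2`.
-/

open Real

theorem Real.rpow_le_mul_rpow_of_le_mul {t s δ p : ℝ} (ht : 0 ≤ t) (hs : 0 ≤ s) (hδ : 0 ≤ δ)
    (hp : 0 ≤ p) (hts : t ≤ δ * s) : t ^ p ≤ δ ^ p * s ^ p :=
  (rpow_le_rpow ht hts hp).trans_eq (mul_rpow hδ hs)

theorem exists_pos_le_half_mul_rpow_le_half {C p : ℝ} (hC : 0 < C) (hp : 0 < p) :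
    ∃ δ : ℝ, 0 < δ ∧ δ ≤ 1 / 2 ∧ C * δ ^ p ≤ 1 / 2 := by
  set ε : ℝ := (2 * C)⁻¹ ^ p⁻¹
  have hε : 0 < ε := by positivity
  refine ⟨min (1 / 2) ε, lt_min (by norm_num) hε, min_le_left _ _, ?_⟩
  have hpow : min (1 / 2) ε ^ p ≤ (2 * C)⁻¹ :=
    calc min (1 / 2) ε ^ p ≤ ε ^ p := rpow_le_rpow (by positivity) (min_le_right _ _) hp.le
      _ = (2 * C)⁻¹ := rpow_inv_rpow (by positivity) hp.ne'
  calc C * min (1 / 2) ε ^ p ≤ C * (2 * C)⁻¹ := by gcongr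
    _ = 1 / 2 := by field_simp

theorem Real.rpow_sub_tangent_ge_of_le_mul {γ δ s t : ℝ} (hγ : 1 ≤ γ) (hδ : 0 ≤ δ) (hs : 0 ≤ s)
    (ht : 0 ≤ t) (hle : t ≤ δ * s) :
    (1 - γ * δ ^ (γ - 1)) * s ^ γ ≤ s ^ γ - t ^ γ - γ * t ^ (γ - 1) * (s - t) := by
  have hsucc : ∀ x : ℝ, 0 ≤ x → x ^ (γ - 1) * x = x ^ γ := fun x hx => by
    rw [← rpow_add_one' hx (by linarith)]; ring_nf
  have hpow : t ^ (γ - 1) ≤ δ ^ (γ - 1) * s ^ (γ - 1) :=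
    rpow_le_mul_rpow_of_le_mul ht hs hδ (by linarith) hle
  have hmid : γ * t ^ (γ - 1) * s ≤ γ * δ ^ (γ - 1) * s ^ γ :=
    calc γ * t ^ (γ - 1) * s ≤ γ * (δ ^ (γ - 1) * s ^ (γ - 1)) * s := by gcongr
      _ = γ * δ ^ (γ - 1) * s ^ γ := by rw [← hsucc s hs]; ring
  have hlast : 0 ≤ (γ - 1) * t ^ γ := mul_nonneg (by linarith) (by positivity)
  have hidentity : s ^ γ - t ^ γ - γ * t ^ (γ - 1) * (s - t)
      = s ^ γ - γ * t ^ (γ - 1) * s + (γ - 1) * t ^ γ := by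
    rw [← hsucc t ht]; ring
  rw [hidentity]
  linarith

/-- Lower bound on the relative entropy density `H(ϱ) − H(ϱ̃) − H'(ϱ̃)(ϱ − ϱ̃)`
in the regime `ϱ ≥ δ⁻¹·ϱ̃`, with `H(s) = a/(γ-1)·s^γ`. -/
theorem stmt_5 (a γ : ℝ) (ha : 0 < a) (hγ : 1 < γ) :
    ∃ δ : ℝ, 0 < δ ∧ δ ≤ 1 / 2 ∧
      ∀ ϱ ϱt : ℝ, 0 ≤ ϱ → 0 ≤ ϱt → ϱ ≥ δ⁻¹ * ϱt →
        a / (γ - 1) * ϱ ^ γ - a / (γ - 1) * ϱt ^ γ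
          - a * γ / (γ - 1) * ϱt ^ (γ - 1) * (ϱ - ϱt)
          ≥ a / (2 * (γ - 1)) * ϱ ^ γ := by
  obtain ⟨δ, hδ, hδ_half, hγδ⟩ :=
    exists_pos_le_half_mul_rpow_le_half (C := γ) (p := γ - 1) (by linarith) (by linarith)
  refine ⟨δ, hδ, hδ_half, fun ϱ ϱt hϱ hϱt hge => ?_⟩
  have hbound := rpow_sub_tangent_ge_of_le_mul hγ.le hδ.le hϱ hϱt ((inv_mul_le_iff₀ hδ).1 hge)
  have hhalf : 1 / 2 * ϱ ^ γ ≤ ϱ ^ γ - ϱt ^ γ - γ * ϱt ^ (γ - 1) * (ϱ - ϱt) :=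
    le_trans (by gcongr; linarith) hbound
  have hcoef : 0 ≤ a / (γ - 1) := div_nonneg ha.le (by linarith)
  calc a / (2 * (γ - 1)) * ϱ ^ γ = a / (γ - 1) * (1 / 2 * ϱ ^ γ) := by
        rw [mul_comm 2, ← div_div]; ring
    _ ≤ a / (γ - 1) * (ϱ ^ γ - ϱt ^ γ - γ * ϱt ^ (γ - 1) * (ϱ - ϱt)) := by gcongr
    _ = _ := by ring
end

section
/- Let a > 0 and γ > 1, and define H(s) = a/(γ-1)·s^γ. There exist δ > 0 and c > 0 depending only on a and γ such that for all ϱ, ϱ̃ ≥ 0: if δ·ϱ̃ ≤ ϱ ≤ δ⁻¹·ϱ̃ then H(ϱ) − H(ϱ̃) − H'(ϱ̃)(ϱ − ϱ̃) ≥ c·ϱ̃^(γ−2)·(ϱ − ϱ̃)² (interpreting this as 0 when ϱ̃ = 0 and γ < 2 forces ϱ = ϱ̃ = 0), and otherwise H(ϱ) − H(ϱ̃) − H'(ϱ̃)(ϱ − ϱ̃) ≥ c·max{ϱ^γ, ϱ̃^γ}. -/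
/-!
Dividing by `ϱ̃ ^ γ` reduces everything to the one-variable function
`f x = x ^ γ - 1 - γ (x - 1)`, `x = ϱ / ϱ̃`. Since `f'' x = γ (γ - 1) x ^ (γ - 2)` is bounded below
by `γ (γ - 1) δ ^ |γ - 2|` on `[δ, δ⁻¹]` and `f 1 = f' 1 = 0`, `f` dominates a multiple of
`(x - 1) ^ 2` there. Off `[δ, δ⁻¹]`, for small `δ`, `f x ≥ (γ - 1) / 2` when `x < δ` and
`f x ≥ x ^ γ / 2` when `x > δ⁻¹`.
-/

open Real Set

theorem ConvexOn.add_mul_sub_le_of_hasDerivAt {S : Set ℝ} {f : ℝ → ℝ} {x y f' : ℝ}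
    (hf : ConvexOn ℝ S f) (hx : x ∈ S) (hy : y ∈ S) (hf' : HasDerivAt f f' x) :
    f x + f' * (y - x) ≤ f y := by
  rcases lt_trichotomy x y with hxy | rfl | hxy
  · have h := hf.le_slope_of_hasDerivAt hx hy hxy hf'
    rw [slope_def_field, le_div_iff₀ (sub_pos.2 hxy)] at h
    linarith
  · simp
  · have h := hf.slope_le_of_hasDerivAt hy hx hxy hf'
    rw [slope_def_field, div_le_iff₀ (sub_pos.2 hxy)] at h
    linarith

/-- `f'' ≥ c` makes `f - c/2 (· - x₀)²` convex. -/
theorem add_mul_sub_add_sq_le_of_le_deriv2 {f f' f'' : ℝ → ℝ} {a b c x₀ x : ℝ}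
    (hf : ∀ y ∈ Icc a b, HasDerivAt f (f' y) y) (hf' : ∀ y ∈ Ioo a b, HasDerivAt f' (f'' y) y)
    (hc : ∀ y ∈ Ioo a b, c ≤ f'' y) (hx₀ : x₀ ∈ Icc a b) (hx : x ∈ Icc a b) :
    f x₀ + f' x₀ * (x - x₀) + c / 2 * (x - x₀) ^ 2 ≤ f x := by
  have hg : ∀ y ∈ Icc a b,
      HasDerivAt (fun y ↦ f y - c / 2 * (y - x₀) ^ 2) (f' y - c * (y - x₀)) y := fun y hy ↦
    ((hf y hy).fun_sub ((((hasDerivAt_id y).sub_const x₀).fun_pow 2).const_mul (c / 2))).congr_deriv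
      (by simp; ring)
  have hg' : ∀ y ∈ Ioo a b, HasDerivAt (fun y ↦ f' y - c * (y - x₀)) (f'' y - c) y :=
    fun y hy ↦ ((hf' y hy).fun_sub (((hasDerivAt_id y).sub_const x₀).const_mul c)).congr_deriv
      (by simp)
  have hconv : ConvexOn ℝ (Icc a b) fun y ↦ f y - c / 2 * (y - x₀) ^ 2 := by
    refine convexOn_of_hasDerivWithinAt2_nonneg (convex_Icc a b)
      (fun y hy ↦ (hg y hy).continuousAt.continuousWithinAt)
      (f' := fun y ↦ f' y - c * (y - x₀)) (f'' := fun y ↦ f'' y - c) ?_ ?_ ?_ <;>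
      rw [interior_Icc]
    · exact fun y hy ↦ (hg y (Ioo_subset_Icc_self hy)).hasDerivWithinAt
    · exact fun y hy ↦ (hg' y hy).hasDerivWithinAt
    · exact fun y hy ↦ sub_nonneg.2 (hc y hy)
  have h := hconv.add_mul_sub_le_of_hasDerivAt hx₀ hx (hg x₀ hx₀)
  simp only [sub_self] at h
  linarith

theorem Real.rpow_abs_le_rpow_of_mem_Icc {δ x : ℝ} (p : ℝ) (hδ : 0 < δ) (hx : x ∈ Icc δ δ⁻¹) :
    δ ^ |p| ≤ x ^ p := by
  rcases le_total 0 p with hp | hp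
  · rw [abs_of_nonneg hp]
    exact rpow_le_rpow hδ.le hx.1 hp
  · rw [abs_of_nonpos hp, rpow_neg hδ.le, ← inv_rpow hδ.le]
    exact rpow_le_rpow_of_nonpos (hδ.trans_le hx.1) hx.2 hp

/-- The Bregman divergence of `s ↦ s ^ γ`; the relative entropy density of the paper is
`a / (γ - 1)` times it. -/
noncomputable def rpowBregman (γ ϱ ϱt : ℝ) : ℝ :=
  ϱ ^ γ - ϱt ^ γ - γ * ϱt ^ (γ - 1) * (ϱ - ϱt)

theorem rpowBregman_eq_mul {γ ϱ ϱt : ℝ} (hϱ : 0 ≤ ϱ) (hϱt : 0 < ϱt) :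
    rpowBregman γ ϱ ϱt = ϱt ^ γ * rpowBregman γ (ϱ / ϱt) 1 := by
  simp only [rpowBregman, div_rpow hϱ hϱt.le, one_rpow, rpow_sub_one hϱt.ne']
  field_simp

theorem rpowBregman_zero_right {γ : ℝ} (hγ : 1 < γ) (ϱ : ℝ) : rpowBregman γ ϱ 0 = ϱ ^ γ := by
  simp [rpowBregman, zero_rpow (by linarith : γ ≠ 0), zero_rpow (by linarith : γ - 1 ≠ 0)]

theorem sq_le_rpowBregman_one {γ δ x : ℝ} (hγ : 1 ≤ γ) (hδ : 0 < δ) (hx : x ∈ Icc δ δ⁻¹) :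
    γ * (γ - 1) * δ ^ |γ - 2| / 2 * (x - 1) ^ 2 ≤ rpowBregman γ x 1 := by
  have hδ1 : δ ≤ 1 := by
    have := mul_inv_cancel₀ hδ.ne'
    nlinarith [hx.1.trans hx.2]
  have h1 : (1 : ℝ) ∈ Icc δ δ⁻¹ := ⟨hδ1, one_le_inv_iff₀.2 ⟨hδ, hδ1⟩⟩
  have hderiv : ∀ y ∈ Icc δ δ⁻¹, HasDerivAt (· ^ γ) (γ * y ^ (γ - 1)) y := fun y hy ↦
    hasDerivAt_rpow_const (Or.inl (hδ.trans_le hy.1).ne')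
  have hderiv2 : ∀ y ∈ Ioo δ δ⁻¹,
      HasDerivAt (fun y ↦ γ * y ^ (γ - 1)) (γ * (γ - 1) * y ^ (γ - 2)) y := fun y hy ↦
    ((hasDerivAt_rpow_const (p := γ - 1) (Or.inl (hδ.trans hy.1).ne')).const_mul γ).congr_deriv
      (by rw [show γ - 1 - 1 = γ - 2 by ring]; ring)
  have hbound : ∀ y ∈ Ioo δ δ⁻¹, γ * (γ - 1) * δ ^ |γ - 2| ≤ γ * (γ - 1) * y ^ (γ - 2) :=
    fun y hy ↦ mul_le_mul_of_nonneg_left (rpow_abs_le_rpow_of_mem_Icc _ hδ (Ioo_subset_Icc_self hy))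
      (by nlinarith)
  have h := add_mul_sub_add_sq_le_of_le_deriv2 hderiv hderiv2 hbound h1 hx
  simp only [one_rpow, mul_one] at h
  simp only [rpowBregman, one_rpow, mul_one]
  linarith

theorem half_rpow_le_rpowBregman_one {γ x : ℝ} (hγ : 1 ≤ γ) (hx : 0 < x)
    (hxγ : 2 * γ ≤ x ^ (γ - 1)) : x ^ γ / 2 ≤ rpowBregman γ x 1 := by
  rw [rpow_sub_one hx.ne', le_div_iff₀ hx] at hxγ
  simp only [rpowBregman, one_rpow, mul_one]
  nlinarith

theorem exists_rpowBregman_one_ge {γ : ℝ} (hγ : 1 < γ) :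
    ∃ δ C : ℝ, 0 < δ ∧ 0 < C ∧ C ≤ 1 ∧ ∀ x, 0 ≤ x →
      (x ∈ Icc δ δ⁻¹ → C * (x - 1) ^ 2 ≤ rpowBregman γ x 1) ∧
      (x ∉ Icc δ δ⁻¹ → C * max (x ^ γ) 1 ≤ rpowBregman γ x 1) := by
  have hγ0 : 0 < γ := by linarith
  -- `R` is where `x ^ (γ - 1)` reaches `2 γ`
  set R := (2 * γ) ^ (γ - 1)⁻¹
  have hR : 1 ≤ R := one_le_rpow (by linarith) (by simp only [inv_nonneg]; linarith)
  set δ := min ((γ - 1) / (2 * γ)) R⁻¹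
  have hδ : 0 < δ := lt_min (by positivity) (by positivity)
  have hδ1 : δ ≤ 1 := (min_le_right _ _).trans (inv_le_one_of_one_le₀ hR)
  have hγδ : γ * δ ≤ (γ - 1) / 2 :=
    calc γ * δ ≤ γ * ((γ - 1) / (2 * γ)) := mul_le_mul_of_nonneg_left (min_le_left _ _) hγ0.le
      _ = (γ - 1) / 2 := by field_simp
  have hRδ : R ≤ δ⁻¹ := le_inv_of_le_inv₀ (by positivity) (min_le_right _ _)
  set C := min (min (γ * (γ - 1) * δ ^ |γ - 2| / 2) ((γ - 1) / 2)) (1 / 2)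
  have hCγ : C ≤ (γ - 1) / 2 := (min_le_left _ _).trans (min_le_right _ _)
  have hChalf : C ≤ 1 / 2 := min_le_right _ _
  refine ⟨δ, C, hδ, ?_, by linarith, fun x hx ↦ ⟨fun hxδ ↦ ?_, fun hxδ ↦ ?_⟩⟩
  · exact lt_min (lt_min (by positivity) (by linarith)) (by norm_num)
  · have hCsq : C ≤ γ * (γ - 1) * δ ^ |γ - 2| / 2 := (min_le_left _ _).trans (min_le_left _ _)
    exact (mul_le_mul_of_nonneg_right hCsq (sq_nonneg _)).trans
      (sq_le_rpowBregman_one hγ.le hδ hxδ)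
  rw [mem_Icc, not_and_or, not_le, not_le] at hxδ
  rcases hxδ with hsmall | hlarge
  · rw [max_eq_right (rpow_le_one hx (hsmall.le.trans hδ1) hγ0.le)]
    have hxγ := rpow_nonneg hx γ
    have hγx := mul_le_mul_of_nonneg_left hsmall.le hγ0.le
    simp only [rpowBregman, one_rpow, mul_one]
    linarith
  · have hRx : R ≤ x := hRδ.trans hlarge.le
    have hx1 : 1 ≤ x := hR.trans hRx
    rw [max_eq_left (one_le_rpow hx1 hγ0.le)]
    have h2γ : 2 * γ ≤ x ^ (γ - 1) := by
      calc 2 * γ = R ^ (γ - 1) := (rpow_inv_rpow (by linarith) (by linarith)).symm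
        _ ≤ x ^ (γ - 1) := rpow_le_rpow (by positivity) hRx (by linarith)
    have hxγ := rpow_nonneg hx γ
    nlinarith [half_rpow_le_rpowBregman_one hγ.le (by linarith) h2γ]

theorem exists_rpowBregman_ge {γ : ℝ} (hγ : 1 < γ) :
    ∃ δ C : ℝ, 0 < δ ∧ 0 < C ∧ ∀ ϱ ϱt : ℝ, 0 ≤ ϱ → 0 ≤ ϱt →
      ((δ * ϱt ≤ ϱ ∧ ϱ ≤ δ⁻¹ * ϱt) → C * ϱt ^ (γ - 2) * (ϱ - ϱt) ^ 2 ≤ rpowBregman γ ϱ ϱt) ∧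
      (¬(δ * ϱt ≤ ϱ ∧ ϱ ≤ δ⁻¹ * ϱt) → C * max (ϱ ^ γ) (ϱt ^ γ) ≤ rpowBregman γ ϱ ϱt) := by
  obtain ⟨δ, C, hδ, hC, hC1, hbound⟩ := exists_rpowBregman_one_ge hγ
  refine ⟨δ, C, hδ, hC, fun ϱ ϱt hϱ hϱt ↦ ?_⟩
  rcases hϱt.eq_or_lt with rfl | hϱt
  · have hγ0 : (0 : ℝ) ^ γ = 0 := zero_rpow (by linarith)
    rw [rpowBregman_zero_right hγ, hγ0, max_eq_left (rpow_nonneg hϱ γ)]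
    refine ⟨fun h ↦ ?_, fun _ ↦ mul_le_of_le_one_left (rpow_nonneg hϱ γ) hC1⟩
    obtain rfl : ϱ = 0 := le_antisymm (by simpa using h.2) hϱ
    simp [hγ0]
  have hscale : ∀ y, ϱt ^ γ * y = ϱt ^ (γ - 2) * (ϱt ^ 2 * y) := fun y ↦ by
    rw [← mul_assoc, ← rpow_natCast, ← rpow_add hϱt]
    norm_num
  have hmem : (δ * ϱt ≤ ϱ ∧ ϱ ≤ δ⁻¹ * ϱt) ↔ ϱ / ϱt ∈ Icc δ δ⁻¹ :=
    and_congr (le_div_iff₀ hϱt).symm (div_le_iff₀ hϱt).symm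
  obtain ⟨hnear, hfar⟩ := hbound (ϱ / ϱt) (div_nonneg hϱ hϱt.le)
  rw [rpowBregman_eq_mul hϱ hϱt, hmem]
  refine ⟨fun h ↦ ?_, fun h ↦ ?_⟩
  · have hsq : ϱt ^ 2 * (ϱ / ϱt - 1) ^ 2 = (ϱ - ϱt) ^ 2 := by field_simp
    calc C * ϱt ^ (γ - 2) * (ϱ - ϱt) ^ 2 = ϱt ^ γ * (C * (ϱ / ϱt - 1) ^ 2) := by
          rw [hscale, mul_left_comm (ϱt ^ 2), hsq]; ring
      _ ≤ ϱt ^ γ * rpowBregman γ (ϱ / ϱt) 1 := by gcongr; exact hnear h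
  · have hmax : max (ϱ ^ γ) (ϱt ^ γ) = ϱt ^ γ * max ((ϱ / ϱt) ^ γ) 1 := by
      rw [mul_max_of_nonneg _ _ (rpow_nonneg hϱt.le γ), div_rpow hϱ hϱt.le,
        mul_div_cancel₀ _ (rpow_pos_of_pos hϱt γ).ne', mul_one]
    rw [hmax, mul_left_comm]
    gcongr
    exact hfar h

/-- Lemma 5.1 of the paper: two-case lower bound for the relative entropy density
`H(ϱ) − H(ϱ̃) − H'(ϱ̃)(ϱ − ϱ̃)` with `H(s) = a/(γ-1)·s^γ`, `a > 0`, `γ > 1`. -/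
theorem stmt_7 (a γ : ℝ) (ha : 0 < a) (hγ : 1 < γ) :
    ∃ δ c : ℝ, 0 < δ ∧ 0 < c ∧
      ∀ ϱ ϱt : ℝ, 0 ≤ ϱ → 0 ≤ ϱt →
        ((δ * ϱt ≤ ϱ ∧ ϱ ≤ δ⁻¹ * ϱt) →
          a / (γ - 1) * ϱ ^ γ - a / (γ - 1) * ϱt ^ γ
            - a * γ / (γ - 1) * ϱt ^ (γ - 1) * (ϱ - ϱt)
            ≥ c * ϱt ^ (γ - 2) * (ϱ - ϱt) ^ 2) ∧
        (¬(δ * ϱt ≤ ϱ ∧ ϱ ≤ δ⁻¹ * ϱt) →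
          a / (γ - 1) * ϱ ^ γ - a / (γ - 1) * ϱt ^ γ
            - a * γ / (γ - 1) * ϱt ^ (γ - 1) * (ϱ - ϱt)
            ≥ c * max (ϱ ^ γ) (ϱt ^ γ)) := by
  obtain ⟨δ, C, hδ, hC, hbound⟩ := exists_rpowBregman_ge hγ
  have ha' : 0 < a / (γ - 1) := div_pos ha (by linarith)
  refine ⟨δ, a / (γ - 1) * C, hδ, mul_pos ha' hC, fun ϱ ϱt hϱ hϱt ↦ ?_⟩
  have hH : a / (γ - 1) * ϱ ^ γ - a / (γ - 1) * ϱt ^ γ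
      - a * γ / (γ - 1) * ϱt ^ (γ - 1) * (ϱ - ϱt) = a / (γ - 1) * rpowBregman γ ϱ ϱt := by
    rw [rpowBregman]; ring
  obtain ⟨hnear, hfar⟩ := hbound ϱ ϱt hϱ hϱt
  rw [hH]
  exact ⟨fun h ↦ by simpa only [mul_assoc] using mul_le_mul_of_nonneg_left (hnear h) ha'.le,
    fun h ↦ by simpa only [mul_assoc] using mul_le_mul_of_nonneg_left (hfar h) ha'.le⟩
end

section
/- Let k, L ≥ 0, 𝔷 ≥ 0 and define G(s) = kL·s·log s + 𝔷·s². Then for all η, η̃ > 0, (√η − √η̃)² ≤ 4·(G(η) − G(η̃) − G'(η̃)(η − η̃)) holds whenever kL ≥ 1 and 𝔷 ≥ 0; more precisely, kL·(√η − √η̃)² ≤ 4·(G(η) − G(η̃) − G'(η̃)(η − η̃)). -/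
/-! Writing `η = x²`, `η̃ = y²`, the entropy part of the Bregman divergence of `G` satisfies
`η (log η − log η̃) − (η − η̃) = 2x² (log x − log y) − (x² − y²) ≥ 2x² (1 − y/x) − (x² − y²) = (x − y)²`
by `log t ≤ t − 1` at `t = y/x`, while the quadratic part of `G` contributes `𝔷 (η − η̃)² ≥ 0`. -/

open Real

lemma sq_sqrt_sub_sqrt_le_entropy {η ηt : ℝ} (hη : 0 < η) (hηt : 0 < ηt) :
    (√η - √ηt) ^ 2 ≤ η * (log η - log ηt) - (η - ηt) := by
  set x := √η
  set y := √ηt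
  have hx : 0 < x := sqrt_pos.mpr hη
  have hy : 0 < y := sqrt_pos.mpr hηt
  have hηx : η = x ^ 2 := (sq_sqrt hη.le).symm
  have hηy : ηt = y ^ 2 := (sq_sqrt hηt.le).symm
  have hlog : log η - log ηt = 2 * (log x - log y) := by
    rw [hηx, hηy, log_pow, log_pow]; push_cast; ring
  have hratio : 1 - y / x ≤ log x - log y := by
    have := log_le_sub_one_of_pos (div_pos hy hx)
    rw [log_div hy.ne' hx.ne'] at this
    linarith
  have hscaled : x ^ 2 * (1 - y / x) = x ^ 2 - x * y := by
    field_simp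
  calc (x - y) ^ 2 = 2 * (x ^ 2 * (1 - y / x)) - (x ^ 2 - y ^ 2) := by rw [hscaled]; ring
    _ ≤ 2 * (x ^ 2 * (log x - log y)) - (x ^ 2 - y ^ 2) := by gcongr
    _ = η * (log η - log ηt) - (η - ηt) := by rw [hlog, hηx, hηy]; ring

/-- Uniform bound (5.20): the squared difference of square roots is controlled by
the relative entropy density of `G(s) = kL·s·log s + 𝔷·s²`; precisely
`kL·(√η − √η̃)² ≤ 4·(G(η) − G(η̃) − G'(η̃)(η − η̃))`. -/
theorem stmt_10 (k L z : ℝ) (hk : 0 ≤ k) (hL : 0 ≤ L) (hz : 0 ≤ z) :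
    ∀ η ηt : ℝ, 0 < η → 0 < ηt →
      k * L * (Real.sqrt η - Real.sqrt ηt) ^ 2
        ≤ 4 * ((k * L * η * Real.log η + z * η ^ 2)
          - (k * L * ηt * Real.log ηt + z * ηt ^ 2)
          - (k * L * (Real.log ηt + 1) + 2 * z * ηt) * (η - ηt)) := by
  intro η ηt hη hηt
  have hentropy := sq_sqrt_sub_sqrt_le_entropy hη hηt
  have hkL : 0 ≤ k * L := mul_nonneg hk hL
  have hquad : 0 ≤ z * (η - ηt) ^ 2 := by positivity
  have hbregman : (k * L * η * log η + z * η ^ 2) - (k * L * ηt * log ηt + z * ηt ^ 2)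
      - (k * L * (log ηt + 1) + 2 * z * ηt) * (η - ηt)
      = k * L * (η * (log η - log ηt) - (η - ηt)) + z * (η - ηt) ^ 2 := by ring
  have hD : 0 ≤ η * (log η - log ηt) - (η - ηt) := (sq_nonneg _).trans hentropy
  rw [hbregman]
  calc k * L * (√η - √ηt) ^ 2 ≤ k * L * (η * (log η - log ηt) - (η - ηt)) :=
        mul_le_mul_of_nonneg_left hentropy hkL
    _ ≤ 4 * (k * L * (η * (log η - log ηt) - (η - ηt)) + z * (η - ηt) ^ 2) := by
        linarith [mul_nonneg hkL hD]
end
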